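/- arXiv:1507.07025 — 5 statements merged into one kernel-verified Lean document; each statement's English description precedes it below -/
import Mathlib

section
/- If g : ℕ → ℝ is positive with g(n) → 0 as n → ∞, and there exists a constant c such that the interval (n, n + g(n)√n) contains a prime for every integer n ≥ c, then √(p_{m+1}) - √(p_m) → 0 as m → ∞, where p_m denotes the m-th prime. -/
/-! If the next prime after `p_m` lies below `p_m + g(p_m) √p_m`, then completing the square,
`p_m + g √p_m ≤ (√p_m + g)²`, gives `√p_{m+1} - √p_m ≤ g(p_m)`, and `g(p_m) → 0` since `p_m → ∞`. -/

open Filter Real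

lemma Real.sqrt_le_sqrt_add_of_lt_of_le_add_mul_sqrt {x y e : ℝ} (hx : 0 ≤ x) (hxy : x < y)
    (hy : y ≤ x + e * √x) : √y ≤ √x + e := by
  have he : 0 < e := pos_of_mul_pos_left (by linarith) (sqrt_nonneg x)
  have hsq : y ≤ (√x + e) ^ 2 := by
    nlinarith [sq_sqrt hx, sqrt_nonneg x]
  calc √y ≤ √((√x + e) ^ 2) := sqrt_le_sqrt hsq
    _ = √x + e := sqrt_sq (by positivity)

lemma Nat.nth_succ_le_of_nth_lt {p : ℕ → Prop} {k a : ℕ} (h : nth p k < a) (ha : p a) :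
    nth p (k + 1) ≤ a :=
  not_lt.1 fun hlt => (le_nth_of_lt_nth_succ hlt ha).not_gt h

lemma Nat.real_sqrt_nth_succ_sub_le {p : ℕ → Prop} {k a : ℕ} {e : ℝ} (ha : p a)
    (hlt : (nth p k : ℝ) < a) (hle : (a : ℝ) < nth p k + e * √(nth p k)) :
    √(nth p (k + 1)) - √(nth p k) ≤ e := by
  have hsucc : (nth p (k + 1) : ℝ) ≤ a := mod_cast nth_succ_le_of_nth_lt (mod_cast hlt) ha
  have := sqrt_le_sqrt_add_of_lt_of_le_add_mul_sqrt (Nat.cast_nonneg _) hlt hle.le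
  linarith [Real.sqrt_le_sqrt hsucc]

theorem stmt3_general (g : ℕ → ℝ)
    (hg0 : Filter.Tendsto g Filter.atTop (nhds 0))
    (h : ∃ c : ℕ, ∀ n : ℕ, c ≤ n →
      ∃ m : ℕ, m.Prime ∧ (n : ℝ) < m ∧ (m : ℝ) < n + g n * Real.sqrt n) :
    Filter.Tendsto
      (fun m : ℕ => Real.sqrt (Nat.nth Nat.Prime (m + 1)) - Real.sqrt (Nat.nth Nat.Prime m))
      Filter.atTop (nhds 0) := by
  obtain ⟨c, hc⟩ := h
  have hmono := Nat.nth_strictMono Nat.infinite_setOfPred_prime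
  have hnth : Tendsto (Nat.nth Nat.Prime) atTop atTop := hmono.tendsto_atTop
  refine squeeze_zero' (Eventually.of_forall fun m => ?_) ?_ (hg0.comp hnth)
  · exact sub_nonneg.2 (sqrt_le_sqrt (mod_cast (hmono (Nat.lt_succ_self m)).le))
  · filter_upwards [hnth.eventually_ge_atTop c] with m hm
    obtain ⟨q, hq, hlt, hle⟩ := hc _ hm
    exact Nat.real_sqrt_nth_succ_sub_le hq hlt hle

theorem stmt3 (g : ℕ → ℝ) (hg : ∀ n : ℕ, 0 < g n)
    (hg0 : Filter.Tendsto g Filter.atTop (nhds 0))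
    (h : ∃ c : ℕ, ∀ n : ℕ, c ≤ n →
      ∃ m : ℕ, m.Prime ∧ (n : ℝ) < m ∧ (m : ℝ) < n + g n * Real.sqrt n) :
    Filter.Tendsto
      (fun m : ℕ => Real.sqrt (Nat.nth Nat.Prime (m + 1)) - Real.sqrt (Nat.nth Nat.Prime m))
      Filter.atTop (nhds 0) :=
  stmt3_general g hg0 h
end

section
/- The interval (n - 2√n, n) contains a prime for every integer n ≥ 4 if and only if p_k - p_{k-1} < 2√(p_k) holds for every prime p_k ≥ 3, where p_{k-1} denotes the largest prime below p_k. -/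
def PrevPrime (p p' : ℕ) : Prop :=
  p'.Prime ∧ p' < p ∧ ∀ r : ℕ, r.Prime → r < p → r ≤ p'

/-!
If every `(n - 2√n, n)` contains a prime, apply this with `n = p` to get a prime in
`(p - 2√p, p)`, which is at most the previous prime (`p = 3` is checked by hand).
Conversely, for `n ≥ 4` let `p` be the least prime `≥ n` and `p'` its predecessor: then
`p' < n`, and `p' > p - 2√p ≥ n - 2√n` because `x ↦ x - 2√x` is monotone on `[1, ∞)`.
-/

open Real

lemma monotoneOn_sub_two_mul_sqrt : MonotoneOn (fun x : ℝ => x - 2 * √x) (Set.Ici 1) := by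
  intro a ha b _ hab
  have h1a : 1 ≤ √a := Real.one_le_sqrt.mpr ha
  have hsqrt : √a ≤ √b := Real.sqrt_le_sqrt hab
  have ha0 : 0 ≤ a := by linarith [Set.mem_Ici.mp ha]
  have hb0 : 0 ≤ b := by linarith [Set.mem_Ici.mp ha]
  -- `b - a - 2(√b - √a) = (√b - √a)(√b + √a - 2)`, a product of nonnegatives
  nlinarith [Real.sq_sqrt ha0, Real.sq_sqrt hb0,
    mul_nonneg (sub_nonneg.2 hsqrt) (show 0 ≤ √a + √b - 2 by linarith)]

lemma prevPrime_findGreatest {p : ℕ} (hp : 3 ≤ p) :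
    PrevPrime p (Nat.findGreatest Nat.Prime (p - 1)) :=
  ⟨Nat.findGreatest_spec (by omega) Nat.prime_two,
    by have := Nat.findGreatest_le (P := Nat.Prime) (p - 1); omega,
    fun _ hr hrp => Nat.le_findGreatest (by omega) hr⟩

lemma PrevPrime.eq_two_of_three {p' : ℕ} (h : PrevPrime 3 p') : p' = 2 := by
  have := h.1.two_le
  have := h.2.1
  omega

theorem stmt7 :
    (∀ n : ℕ, 4 ≤ n → ∃ m : ℕ, m.Prime ∧ (n : ℝ) - 2 * Real.sqrt n < m ∧ m < n) ↔
    (∀ p p' : ℕ, p.Prime → 3 ≤ p → PrevPrime p p' → (p : ℝ) - p' < 2 * Real.sqrt p) := by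
  constructor
  · intro h p p' _ hp3 hprev
    rcases hp3.eq_or_lt with rfl | hp4
    · obtain rfl := hprev.eq_two_of_three
      have : (1 : ℝ) ≤ √3 := Real.one_le_sqrt.mpr (by norm_num)
      push_cast
      linarith
    · obtain ⟨m, hm, hgap, hmp⟩ := h p hp4
      have : (m : ℝ) ≤ p' := by exact_mod_cast hprev.2.2 m hm (by exact_mod_cast hmp)
      linarith
  · intro h n hn
    classical
    have hex : ∃ q, n ≤ q ∧ q.Prime := Nat.exists_infinite_primes n
    obtain ⟨hnp, hp⟩ := Nat.find_spec hex
    set p := Nat.find hex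
    have hprev := prevPrime_findGreatest (p := p) (by omega)
    set p' := Nat.findGreatest Nat.Prime (p - 1)
    have hp'n : p' < n := by
      by_contra! hc
      exact absurd (Nat.find_min' hex ⟨hc, hprev.1⟩) (not_le.mpr hprev.2.1)
    have hgap := h p p' hp (by omega) hprev
    have hmono := monotoneOn_sub_two_mul_sqrt (a := (n : ℝ)) (b := p)
      (Set.mem_Ici.mpr (by exact_mod_cast (show 1 ≤ n by omega)))
      (Set.mem_Ici.mpr (by exact_mod_cast (show 1 ≤ p by omega))) (by exact_mod_cast hnp)
    exact ⟨p', hprev.1, by simp only at hmono; linarith, hp'n⟩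
end

section
/- If for every prime p ≥ 3 the previous prime p' satisfies p - p' < 2√p, then for every integer m ≥ 2 the interval ((m-1)², m²) contains a prime (Legendre's conjecture, conditionally). -/
theorem exists_prevPrime {p : ℕ} (hp : 2 < p) : ∃ p', PrevPrime p p' := by
  have hne : ((Finset.range p).filter Nat.Prime).Nonempty :=
    ⟨2, Finset.mem_filter.2 ⟨Finset.mem_range.2 hp, Nat.prime_two⟩⟩
  obtain ⟨p', hp', hmax⟩ := Finset.exists_max_image _ id hne
  rw [Finset.mem_filter, Finset.mem_range] at hp'
  exact ⟨p', hp'.2, hp'.1,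
    fun r hr hrp => hmax r (Finset.mem_filter.2 ⟨Finset.mem_range.2 hrp, hr⟩)⟩

theorem PrevPrime.le_of_forall_prime_gt_le {n p p' : ℕ} (hprev : PrevPrime p p')
    (hleast : ∀ r : ℕ, r.Prime → n < r → p ≤ r) : p' ≤ n := by
  by_contra! hn
  exact (hleast p' hprev.1 hn).not_gt hprev.2.1

theorem exists_least_prime_gt (n : ℕ) :
    ∃ p, p.Prime ∧ n < p ∧ ∀ r : ℕ, r.Prime → n < r → p ≤ r := by
  have hex : ∃ p, p.Prime ∧ n < p :=
    (Nat.exists_infinite_primes (n + 1)).imp fun _ h => ⟨h.2, h.1⟩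
  exact ⟨Nat.find hex, (Nat.find_spec hex).1, (Nat.find_spec hex).2,
    fun r hr hnr => Nat.find_min' hex ⟨hr, hnr⟩⟩

theorem two_mul_sqrt_le_sub_of_lt_sq_pred {m p q : ℕ} (hm : 1 ≤ m) (hp : m ^ 2 ≤ p)
    (hq : q < (m - 1) ^ 2) : 2 * √(p : ℝ) ≤ p - q := by
  have hq' : (q : ℝ) + 1 ≤ ((m : ℝ) - 1) ^ 2 := by
    have hcast : ((m - 1 : ℕ) : ℝ) = m - 1 := by rw [Nat.cast_sub hm, Nat.cast_one]
    rw [← hcast]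
    exact_mod_cast hq
  have hm' : (1 : ℝ) ≤ m := by exact_mod_cast hm
  have hsq : √(p : ℝ) ^ 2 = p := Real.sq_sqrt (Nat.cast_nonneg p)
  have hms : (m : ℝ) ≤ √(p : ℝ) := Real.le_sqrt_of_sq_le (by exact_mod_cast hp)
  have hsq_le : ((m : ℝ) - 1) ^ 2 ≤ (√(p : ℝ) - 1) ^ 2 :=
    pow_le_pow_left₀ (by linarith) (by linarith) 2
  nlinarith

theorem stmt8
    (h : ∀ p p' : ℕ, p.Prime → 3 ≤ p → PrevPrime p p' → (p : ℝ) - p' < 2 * Real.sqrt p) :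
    ∀ m : ℕ, 2 ≤ m → ∃ r : ℕ, r.Prime ∧ (m - 1) ^ 2 < r ∧ r < m ^ 2 := by
  intro m hm
  by_contra! hnone
  obtain ⟨p, hp, hp_gt, hp_least⟩ := exists_least_prime_gt ((m - 1) ^ 2)
  have hmp : m ^ 2 ≤ p := hnone p hp hp_gt
  have h4p : 4 ≤ p := le_trans (by nlinarith) hmp
  obtain ⟨p', hprev⟩ := exists_prevPrime (by omega : 2 < p)
  have hp'_lt : p' < (m - 1) ^ 2 :=
    (hprev.le_of_forall_prime_gt_le hp_least).lt_of_ne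
      fun heq => Nat.Prime.not_prime_pow le_rfl (heq ▸ hprev.1)
  exact (h p p' hp (by omega) hprev).not_ge
    (two_mul_sqrt_le_sub_of_lt_sq_pred (by omega) hmp hp'_lt)
end

section
/- For every integer n ≥ 131, both intervals (n - √n, n) and (n, n + √n) contain a prime, if and only if p - p' < √(p') holds for every prime p ≥ 131, where p' is the previous prime before p. -/
namespace PrevPrime

variable {p p' : ℕ}

theorem le_of_prime_of_lt (h : PrevPrime p p') {q : ℕ} (hq : q.Prime) (hq' : p' < q) : p ≤ q := by
  by_contra! hqp
  exact absurd (h.2.2 q hq hqp) (not_le.2 hq')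

theorem unique {p'' : ℕ} (h : PrevPrime p p') (h' : PrevPrime p p'') : p' = p'' :=
  le_antisymm (h'.2.2 p' h.1 h.2.1) (h.2.2 p'' h'.1 h'.2.1)

theorem sub_lt_of_exists_prime {f : ℝ → ℝ} (h : PrevPrime p p') {q : ℕ} (hq : q.Prime)
    (hq' : p' < q) (hqf : (q : ℝ) < p' + f p') : (p : ℝ) - p' < f p' := by
  have : (p : ℝ) ≤ q := by exact_mod_cast h.le_of_prime_of_lt hq hq'
  linarith

end PrevPrime

theorem prevPrime_131_127 : PrevPrime 131 127 := by
  refine ⟨by norm_num, by norm_num, fun r hr hr131 => ?_⟩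
  by_contra! hr127
  interval_cases r <;> norm_num at hr

theorem exists_prevPrime_le_lt {n : ℕ} (hn : 2 ≤ n) :
    ∃ p p', p.Prime ∧ n < p ∧ PrevPrime p p' ∧ p' ≤ n := by
  have hex : ∃ p, p.Prime ∧ n < p := (Nat.exists_infinite_primes (n + 1)).imp fun _ h => h.symm
  obtain ⟨hp, hnp⟩ := Nat.find_spec hex
  obtain ⟨p', hp'⟩ := exists_prevPrime (p := Nat.find hex) (by omega)
  refine ⟨Nat.find hex, p', hp, hnp, hp', ?_⟩
  by_contra! hnp'
  exact absurd (Nat.find_min' hex ⟨hp'.1, hnp'⟩) (not_le.2 hp'.2.1)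

section GapBound

variable {f : ℝ → ℝ} {N : ℕ}

theorem sub_prevPrime_lt_of_le (hf : Monotone f)
    (hgap : ∀ p p' : ℕ, p.Prime → N ≤ p → PrevPrime p p' → (p : ℝ) - p' < f p')
    {n p p' : ℕ} (hp : p.Prime) (hNp : N ≤ p) (hpp' : PrevPrime p p') (hp'n : p' ≤ n) :
    (p : ℝ) - p' < f n :=
  (hgap p p' hp hNp hpp').trans_le (hf (by exact_mod_cast hp'n))

theorem exists_prime_lt_add_of_gap_lt (hf : Monotone f)
    (hgap : ∀ p p' : ℕ, p.Prime → N ≤ p → PrevPrime p p' → (p : ℝ) - p' < f p')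
    {n : ℕ} (hN : N ≤ n) (hn : 2 ≤ n) : ∃ q : ℕ, q.Prime ∧ (n : ℝ) < q ∧ (q : ℝ) < n + f n := by
  obtain ⟨p, p', hp, hnp, hpp', hp'n⟩ := exists_prevPrime_le_lt hn
  have hlt := sub_prevPrime_lt_of_le hf hgap hp (by omega) hpp' hp'n
  have : (p' : ℝ) ≤ n := by exact_mod_cast hp'n
  exact ⟨p, hp, by exact_mod_cast hnp, by linarith⟩

theorem exists_prime_sub_lt_of_gap_lt (hf : Monotone f)
    (hgap : ∀ p p' : ℕ, p.Prime → N ≤ p → PrevPrime p p' → (p : ℝ) - p' < f p')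
    {n : ℕ} (hN : N ≤ n) (hn : 3 ≤ n) : ∃ q : ℕ, q.Prime ∧ (n : ℝ) - f n < q ∧ q < n := by
  obtain ⟨p, p', hp, hnp, hpp', hp'n⟩ := exists_prevPrime_le_lt (n := n - 1) (by omega)
  have hlt := sub_prevPrime_lt_of_le hf hgap hp (by omega) hpp' (by omega : p' ≤ n)
  have : (n : ℝ) ≤ p := by exact_mod_cast (by omega : n ≤ p)
  exact ⟨p', hpp'.1, by linarith, by omega⟩

end GapBound

theorem stmt10 :
    (∀ n : ℕ, 131 ≤ n →
      (∃ p : ℕ, p.Prime ∧ (n : ℝ) - Real.sqrt n < p ∧ p < n) ∧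
      (∃ q : ℕ, q.Prime ∧ (n : ℝ) < q ∧ (q : ℝ) < n + Real.sqrt n)) ↔
    (∀ p p' : ℕ, p.Prime → 131 ≤ p → PrevPrime p p' → (p : ℝ) - p' < Real.sqrt p') := by
  constructor
  · intro h p p' _ hp131 hpp'
    rcases hp131.eq_or_lt with rfl | h131p
    · rw [hpp'.unique prevPrime_131_127]
      have : (4 : ℝ) < Real.sqrt 127 := Real.lt_sqrt_of_sq_lt (by norm_num)
      push_cast
      linarith
    · obtain ⟨-, q, hq, hp'q, hq'⟩ := h p' (hpp'.2.2 131 (by norm_num) h131p)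
      exact hpp'.sub_lt_of_exists_prime hq (by exact_mod_cast hp'q) hq'
  · intro h n hn
    exact ⟨exists_prime_sub_lt_of_gap_lt Real.sqrt_monotone h hn (by omega),
      exists_prime_lt_add_of_gap_lt Real.sqrt_monotone h hn (by omega)⟩
end

section
/- If q - p < 2√q for all consecutive primes p < q with q ≥ 3, then the interval (m² - 2m, m²) contains a prime for every m ≥ 2. -/
def NextPrime (p q : ℕ) : Prop :=
  q.Prime ∧ p < q ∧ ∀ r : ℕ, r.Prime → p < r → q ≤ r

theorem stmt18
    (h : ∀ p q : ℕ, p.Prime → NextPrime p q → 3 ≤ q → (q : ℝ) - p < 2 * Real.sqrt q) :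
    ∀ m : ℕ, 2 ≤ m → ∃ r : ℕ, r.Prime ∧ (m : ℝ) ^ 2 - 2 * m < r ∧ (r : ℝ) < (m : ℝ) ^ 2 := by
  intro m hm
  have hm2 : 4 ≤ m ^ 2 := by nlinarith
  classical
  have hpred : Nat.Prime 3 ∧ 3 < m ^ 2 := ⟨by norm_num, by omega⟩
  set p := Nat.findGreatest (fun r => r.Prime ∧ r < m ^ 2) (m ^ 2) with hp
  have hple : 3 ≤ p := Nat.le_findGreatest (by omega) hpred
  have hpspec : p.Prime ∧ p < m ^ 2 :=
    Nat.findGreatest_spec (P := fun r => r.Prime ∧ r < m ^ 2) (show 3 ≤ m ^ 2 by omega) hpred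
  obtain ⟨hpp, hplt⟩ := hpspec
  obtain ⟨q0, hq0gt, hq0p⟩ := Nat.exists_infinite_primes (p + 1)
  have hexq : ∃ q, q.Prime ∧ p < q := ⟨q0, hq0p, by omega⟩
  set q := Nat.find hexq with hq
  have hqspec : q.Prime ∧ p < q := Nat.find_spec hexq
  have hnext : NextPrime p q := ⟨hqspec.1, hqspec.2, fun r hr hpr =>
    Nat.find_min' hexq ⟨hr, hpr⟩⟩
  have hq3 : 3 ≤ q := by have := hpp.two_le; omega
  have hge : m ^ 2 ≤ q := by
    by_contra hc
    push_neg at hc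
    exact Nat.findGreatest_is_greatest hqspec.2 (by omega) ⟨hqspec.1, hc⟩
  have hgap := h p q hpp hnext hq3
  refine ⟨p, hpp, ?_, ?_⟩
  · have hsq : (m : ℝ) ≤ Real.sqrt q := by
      rw [show ((m:ℝ)) = Real.sqrt ((m:ℝ)^2) from (Real.sqrt_sq (by positivity)).symm]
      apply Real.sqrt_le_sqrt
      have : ((m ^ 2 : ℕ) : ℝ) ≤ ((q : ℕ) : ℝ) := Nat.cast_le.mpr hge
      push_cast at this ⊢
      linarith
    have hsqsq : Real.sqrt q * Real.sqrt q = q := Real.mul_self_sqrt (by positivity)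
    have hm2r : (2:ℝ) ≤ m := by exact_mod_cast hm
    nlinarith [hgap, hsq, hsqsq, mul_nonneg (sub_nonneg.mpr hsq) (by linarith : (0:ℝ) ≤ Real.sqrt q + m - 2)]
  · exact_mod_cast hplt
end
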